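/- A Hausdorff Boolean inverse semigroup S is quasi-fundamental if and only if it is fundamental. -/

import Mathlib

/-- An inverse semigroup with zero. -/
class InverseSemigroup0 (S : Type*) extends Semigroup S, Zero S, Star S where
  zero_mul : ∀ s : S, 0 * s = 0
  mul_zero : ∀ s : S, s * 0 = 0
  mul_star_mul_self : ∀ s : S, s * star s * s = s
  star_mul_self_star : ∀ s : S, star s * s * star s = star s
  star_unique : ∀ s t : S, s * t * s = s → t * s * t = t → t = star s

/-- The natural partial order on an inverse semigroup. -/
def NatLe {S : Type*} [InverseSemigroup0 S] (a b : S) : Prop := a = b * star a * a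

/-- Two elements are compatible if `s t*` and `s* t` are idempotent. -/
def Compat {S : Type*} [InverseSemigroup0 S] (s t : S) : Prop :=
  IsIdempotentElem (s * star t) ∧ IsIdempotentElem (star s * t)

/-- A Boolean inverse semigroup: an inverse semigroup with zero whose idempotents form
a (generalized) Boolean algebra (witnessed by the relative complement `\`), possessing
joins of compatible pairs over which multiplication distributes. -/
class BooleanInverseSemigroup0 (S : Type*) extends InverseSemigroup0 S, Max S, SDiff S where
  le_sup_left : ∀ s t : S, Compat s t → NatLe s (s ⊔ t)
  le_sup_right : ∀ s t : S, Compat s t → NatLe t (s ⊔ t)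
  sup_le : ∀ s t u : S, Compat s t → NatLe s u → NatLe t u → NatLe (s ⊔ t) u
  mul_sup : ∀ a s t : S, Compat s t → a * (s ⊔ t) = (a * s) ⊔ (a * t)
  sup_mul : ∀ a s t : S, Compat s t → (s ⊔ t) * a = (s * a) ⊔ (t * a)
  sdiff_idem : ∀ e f : S, IsIdempotentElem e → IsIdempotentElem f → IsIdempotentElem (e \ f)
  sdiff_le : ∀ e f : S, IsIdempotentElem e → IsIdempotentElem f → NatLe (e \ f) e
  sdiff_mul : ∀ e f : S, IsIdempotentElem e → IsIdempotentElem f → (e \ f) * f = 0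
  sdiff_sup : ∀ e f : S, IsIdempotentElem e → IsIdempotentElem f → (e \ f) ⊔ (e * f) = e

variable {S : Type*} [BooleanInverseSemigroup0 S]

/-- The skew difference `s ⊖ t = (s s* \ t t*) s (s* s \ t* t)`. -/
def skewDiff (s t : S) : S :=
  ((s * star s) \ (t * star t)) * s * ((star s * s) \ (star t * t))

/-- The skew addition `s ▽ t = (s ⊖ t) ∨ t`. -/
def skewAdd (s t : S) : S := skewDiff s t ⊔ t

/-- The maximal idempotent-separating congruence `μ`:
`s μ t` iff `s e s* = t e t*` for all idempotents `e`. -/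
def muRel (s t : S) : Prop :=
  ∀ e : S, IsIdempotentElem e → s * e * star s = t * e * star t

/-- `π : S → Q` is an additive projection: zero- and multiplication-preserving, and
preserving joins of compatible pairs. -/
def IsAdditiveProj {S Q : Type*} [BooleanInverseSemigroup0 S] [BooleanInverseSemigroup0 Q]
    (π : S → Q) : Prop :=
  π 0 = 0 ∧ (∀ a b : S, π (a * b) = π a * π b) ∧
    ∀ a b : S, Compat a b → π (a ⊔ b) = π a ⊔ π b

/-- `S` is fundamental: the centralizer of the idempotents consists of idempotents. -/
def Fundamental (S : Type*) [InverseSemigroup0 S] : Prop :=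
  ∀ s : S, (∀ e : S, IsIdempotentElem e → s * e = e * s) → IsIdempotentElem s

/-- `S` is quasi-fundamental: every non-zero element of the centralizer of `E(S)`
lies above some non-zero idempotent. -/
def QuasiFundamental (S : Type*) [InverseSemigroup0 S] : Prop :=
  ∀ s : S, s ≠ 0 → (∀ e : S, IsIdempotentElem e → s * e = e * s) →
    ∃ e : S, e ≠ 0 ∧ IsIdempotentElem e ∧ NatLe e s

/-- An inverse semigroup is Hausdorff if for all `s, t` the order ideal
`s↓ ∩ t↓` is finitely generated. -/
def HausdorffIS (S : Type*) [InverseSemigroup0 S] : Prop :=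
  ∀ s t : S, ∃ F : Finset S,
    {x : S | NatLe x s ∧ NatLe x t} = {x : S | ∃ f ∈ F, NatLe x f}

/-! The Hausdorff condition provides binary meets, hence a greatest idempotent `m` below any `s`.
If `s` centralizes `E(S)`, so does its part `(s s* \ m) s` outside `m`; that part lies below `s`
but above no non-zero idempotent, so quasi-fundamentality kills it and `s = m s = s m = m`. -/

namespace InverseSemigroup0

variable {S : Type*} [InverseSemigroup0 S]

theorem star_star (s : S) : star (star s) = s :=
  (star_unique (star s) s (star_mul_self_star s) (mul_star_mul_self s)).symm

theorem star_eq_self_of_isIdempotentElem {e : S} (he : IsIdempotentElem e) : star e = e := by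
  have h : e * e * e = e := by rw [he.eq, he.eq]
  exact (star_unique e e h h).symm

theorem star_zero : star (0 : S) = 0 :=
  star_eq_self_of_isIdempotentElem (zero_mul 0)

theorem isIdempotentElem_mul_star (s : S) : IsIdempotentElem (s * star s) := by
  rw [IsIdempotentElem, ← mul_assoc, mul_star_mul_self]

theorem isIdempotentElem_star_mul (s : S) : IsIdempotentElem (star s * s) := by
  rw [IsIdempotentElem, ← mul_assoc, star_mul_self_star]

/-- `f (ef)* e` is an inverse of `ef`, hence equals `(ef)*`, and it is
idempotent; so `ef = (ef)**` is idempotent too. -/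
theorem isIdempotentElem_mul {e f : S} (he : IsIdempotentElem e) (hf : IsIdempotentElem f) :
    IsIdempotentElem (e * f) := by
  set x := star (e * f) with hx
  have hefx : e * (f * (x * (e * f))) = e * f := by
    simpa only [mul_assoc] using mul_star_mul_self (e * f)
  have hxef : x * (e * (f * x)) = x := by
    simpa only [mul_assoc] using star_mul_self_star (e * f)
  have hfxe : f * (x * e) = x := by
    refine star_unique (e * f) (f * (x * e)) ?_ ?_
    · simp only [mul_assoc, hf.mul_self_mul, he.mul_self_mul, hefx]
    · calc f * (x * e) * (e * f) * (f * (x * e)) = f * (x * (e * (f * x)) * e) := by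
            simp only [mul_assoc, hf.mul_self_mul, he.mul_self_mul]
        _ = f * (x * e) := by rw [hxef]
  have hx_idem : IsIdempotentElem x := by
    calc x * x = f * (x * (e * (f * x)) * e) := by
          conv_lhs => rw [← hfxe]
          simp only [mul_assoc]
      _ = x := by rw [hxef, hfxe]
  have hef_eq : e * f = x := by
    rw [← star_star (e * f), ← hx, star_eq_self_of_isIdempotentElem hx_idem]
  rwa [hef_eq]

theorem mul_comm_of_isIdempotentElem {e f : S} (he : IsIdempotentElem e)
    (hf : IsIdempotentElem f) : e * f = f * e := by
  have hef := (isIdempotentElem_mul he hf).eq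
  have hfe := (isIdempotentElem_mul hf he).eq
  simp only [mul_assoc] at hef hfe
  have h := star_unique (e * f) (f * e)
    (by simp only [mul_assoc, hf.mul_self_mul, he.mul_self_mul, hef])
    (by simp only [mul_assoc, he.mul_self_mul, hf.mul_self_mul, hfe])
  rw [star_eq_self_of_isIdempotentElem (isIdempotentElem_mul he hf)] at h
  exact h.symm

theorem star_mul (a b : S) : star (a * b) = star b * star a := by
  refine (star_unique (a * b) (star b * star a) ?_ ?_).symm
  · calc a * b * (star b * star a) * (a * b) = a * ((b * star b) * (star a * a)) * b := by
          simp only [mul_assoc]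
      _ = a * star a * a * (b * star b * b) := by
          rw [mul_comm_of_isIdempotentElem (isIdempotentElem_mul_star b)
            (isIdempotentElem_star_mul a)]
          simp only [mul_assoc]
      _ = a * b := by rw [mul_star_mul_self, mul_star_mul_self]
  · calc star b * star a * (a * b) * (star b * star a)
        = star b * ((star a * a) * (b * star b)) * star a := by simp only [mul_assoc]
      _ = star b * b * star b * (star a * a * star a) := by
          rw [mul_comm_of_isIdempotentElem (isIdempotentElem_star_mul a)
            (isIdempotentElem_mul_star b)]
          simp only [mul_assoc]
      _ = star b * star a := by rw [star_mul_self_star, star_mul_self_star]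

theorem isIdempotentElem_mul_mul_star {e : S} (he : IsIdempotentElem e) (c : S) :
    IsIdempotentElem (c * e * star c) := by
  calc c * e * star c * (c * e * star c) = c * (e * (star c * c)) * e * star c := by
        simp only [mul_assoc]
    _ = c * star c * c * (e * e) * star c := by
        rw [mul_comm_of_isIdempotentElem he (isIdempotentElem_star_mul c)]
        simp only [mul_assoc]
    _ = c * e * star c := by rw [mul_star_mul_self, he.eq]

end InverseSemigroup0

namespace NatLe

open InverseSemigroup0

variable {S : Type*} [InverseSemigroup0 S] {a b c : S}

theorem refl (a : S) : NatLe a a := (mul_star_mul_self a).symm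

theorem zero_left (a : S) : NatLe 0 a := by
  rw [NatLe, InverseSemigroup0.star_zero, InverseSemigroup0.mul_zero]

theorem eq_mul_star_mul (h : NatLe a b) : a = b * (star a * a) := by
  rw [← mul_assoc]; exact h

theorem star_eq (h : NatLe a b) : star a = star a * a * star b := by
  conv_lhs => rw [h.eq_mul_star_mul, InverseSemigroup0.star_mul,
    InverseSemigroup0.star_mul, InverseSemigroup0.star_star]

theorem star_mul_self_eq (h : NatLe a b) : star a * a = star a * a * (star b * b) := by
  calc star a * a = star a * a * star b * (b * (star a * a)) := by
        rw [← h.star_eq, ← h.eq_mul_star_mul]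
    _ = star a * a * ((star b * b) * (star a * a)) := by simp only [mul_assoc]
    _ = star a * a * (star b * b) := by
        rw [mul_comm_of_isIdempotentElem (isIdempotentElem_star_mul b)
          (isIdempotentElem_star_mul a), ← mul_assoc, (isIdempotentElem_star_mul a).eq]

theorem trans (hab : NatLe a b) (hbc : NatLe b c) : NatLe a c := by
  suffices c * (star a * a) = a by rw [NatLe, mul_assoc, this]
  calc c * (star a * a) = c * ((star b * b) * (star a * a)) := by
        rw [mul_comm_of_isIdempotentElem (isIdempotentElem_star_mul b)
          (isIdempotentElem_star_mul a), ← hab.star_mul_self_eq]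
    _ = c * (star b * b) * (star a * a) := (mul_assoc _ _ _).symm
    _ = a := by rw [← hbc.eq_mul_star_mul, ← hab.eq_mul_star_mul]

theorem antisymm (hab : NatLe a b) (hba : NatLe b a) : a = b := by
  calc a = a * (star b * b) * (star a * a) := by
        rw [← hba.eq_mul_star_mul, ← hab.eq_mul_star_mul]
    _ = a * star a * a * (star b * b) := by
        rw [mul_assoc, mul_comm_of_isIdempotentElem (isIdempotentElem_star_mul b)
          (isIdempotentElem_star_mul a)]
        simp only [mul_assoc]
    _ = b := by rw [mul_star_mul_self, ← hba.eq_mul_star_mul]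

theorem isIdempotentElem (h : NatLe a b) (hb : IsIdempotentElem b) : IsIdempotentElem a := by
  calc a * a = b * b * ((star a * a) * (star a * a)) := by
        conv_lhs => rw [h.eq_mul_star_mul]
        rw [mul_assoc, ← mul_assoc (star a * a), ← mul_comm_of_isIdempotentElem hb
          (isIdempotentElem_star_mul a)]
        simp only [mul_assoc]
    _ = a := by rw [hb.eq, (isIdempotentElem_star_mul a).eq, ← h.eq_mul_star_mul]

theorem mul_eq_of_isIdempotentElem (h : NatLe a b) (ha : IsIdempotentElem a) : b * a = a := by
  have h' := h.eq_mul_star_mul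
  rwa [star_eq_self_of_isIdempotentElem ha, ha.eq, eq_comm] at h'

theorem mul_star_of_isIdempotentElem (h : NatLe a b) (ha : IsIdempotentElem a) :
    NatLe a (b * star b) := by
  rw [NatLe, star_eq_self_of_isIdempotentElem ha, mul_assoc (b * star b), ha.eq]
  conv_rhs => rw [← h.mul_eq_of_isIdempotentElem ha, ← mul_assoc, mul_star_mul_self]
  exact (h.mul_eq_of_isIdempotentElem ha).symm

theorem of_isIdempotentElem_mul {e : S} (he : IsIdempotentElem e) (s : S) : NatLe (e * s) s := by
  rw [NatLe, InverseSemigroup0.star_mul, star_eq_self_of_isIdempotentElem he]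
  calc e * s = e * (s * star s * s) := by rw [mul_star_mul_self]
    _ = s * star s * (e * e) * s := by
        rw [he.eq, ← mul_comm_of_isIdempotentElem he (isIdempotentElem_mul_star s)]
        simp only [mul_assoc]
    _ = s * (star s * e) * (e * s) := by simp only [mul_assoc]

theorem compat (ha : NatLe a c) (hb : NatLe b c) : Compat a b := by
  constructor
  · have h : a * star b = c * ((star a * a) * (star b * b)) * star c := by
      conv_lhs => rw [ha.eq_mul_star_mul, hb.star_eq]
      simp only [mul_assoc]
    rw [h]
    exact isIdempotentElem_mul_mul_star
      (isIdempotentElem_mul (isIdempotentElem_star_mul a) (isIdempotentElem_star_mul b)) c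
  · have h : star a * b = star a * a * (star c * c * (star b * b)) := by
      conv_lhs => rw [ha.star_eq, hb.eq_mul_star_mul]
      simp only [mul_assoc]
    rw [h]
    exact isIdempotentElem_mul (isIdempotentElem_star_mul a)
      (isIdempotentElem_mul (isIdempotentElem_star_mul c) (isIdempotentElem_star_mul b))

end NatLe

namespace BooleanInverseSemigroup0

open InverseSemigroup0

variable {S : Type*} [BooleanInverseSemigroup0 S]

theorem zero_sup (a : S) : (0 : S) ⊔ a = a :=
  have hc : Compat 0 a := (NatLe.zero_left a).compat (NatLe.refl a)
  NatLe.antisymm (sup_le 0 a a hc (NatLe.zero_left a) (NatLe.refl a)) (le_sup_right 0 a hc)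

theorem compat_of_isIdempotentElem {e f : S} (he : IsIdempotentElem e)
    (hf : IsIdempotentElem f) : Compat e f := by
  constructor
  · rw [star_eq_self_of_isIdempotentElem hf]; exact isIdempotentElem_mul he hf
  · rw [star_eq_self_of_isIdempotentElem he]; exact isIdempotentElem_mul he hf

theorem sdiff_mul_sup_mul {e f : S} (he : IsIdempotentElem e) (hf : IsIdempotentElem f)
    (x : S) : (e \ f) * x ⊔ e * f * x = e * x := by
  rw [← sup_mul x _ _ (compat_of_isIdempotentElem (sdiff_idem e f he hf)
    (isIdempotentElem_mul he hf)), sdiff_sup e f he hf]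

theorem exists_join_of_forall_natLe (F : Finset S) {u : S} (hF : ∀ f ∈ F, NatLe f u) :
    ∃ m, (∀ f ∈ F, NatLe f m) ∧ ∀ w, (∀ f ∈ F, NatLe f w) → NatLe m w := by
  classical
  induction F using Finset.induction_on with
  | empty => exact ⟨0, by simp, fun w _ => NatLe.zero_left w⟩
  | insert a F _ ih =>
    rw [Finset.forall_mem_insert] at hF
    obtain ⟨m, hFm, hm⟩ := ih hF.2
    have hc : Compat a m := hF.1.compat (hm u hF.2)
    refine ⟨a ⊔ m, ?_, fun w hw => ?_⟩
    · rw [Finset.forall_mem_insert]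
      exact ⟨le_sup_left a m hc, fun f hf => (hFm f hf).trans (le_sup_right a m hc)⟩
    · rw [Finset.forall_mem_insert] at hw
      exact sup_le a m w hc hw.1 (hm w hw.2)

end BooleanInverseSemigroup0

section Hausdorff

open InverseSemigroup0 BooleanInverseSemigroup0

variable {S : Type*} [BooleanInverseSemigroup0 S]

theorem HausdorffIS.exists_meet (hH : HausdorffIS S) (s t : S) :
    ∃ m, NatLe m s ∧ NatLe m t ∧ ∀ x, NatLe x s → NatLe x t → NatLe x m := by
  obtain ⟨F, hF⟩ := hH s t
  have hF' (x : S) : NatLe x s ∧ NatLe x t ↔ ∃ f ∈ F, NatLe x f := Set.ext_iff.1 hF x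
  have hFst (f : S) (hf : f ∈ F) : NatLe f s ∧ NatLe f t := (hF' f).2 ⟨f, hf, NatLe.refl f⟩
  obtain ⟨m, hFm, hm⟩ := exists_join_of_forall_natLe F fun f hf => (hFst f hf).1
  refine ⟨m, hm s fun f hf => (hFst f hf).1, hm t fun f hf => (hFst f hf).2,
    fun x hxs hxt => ?_⟩
  obtain ⟨f, hf, hxf⟩ := (hF' x).1 ⟨hxs, hxt⟩
  exact hxf.trans (hFm f hf)

theorem HausdorffIS.exists_greatest_idempotent_natLe (hH : HausdorffIS S) (s : S) :
    ∃ m, IsIdempotentElem m ∧ NatLe m s ∧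
      ∀ f, IsIdempotentElem f → NatLe f s → NatLe f m := by
  obtain ⟨m, hms, hmss, hm⟩ := hH.exists_meet s (s * star s)
  exact ⟨m, hmss.isIdempotentElem (isIdempotentElem_mul_star s), hms,
    fun f hf hfs => hm f hfs (hfs.mul_star_of_isIdempotentElem hf)⟩

theorem QuasiFundamental.eq_of_greatest_idempotent_natLe (hQ : QuasiFundamental S) {s m : S}
    (hs : ∀ e : S, IsIdempotentElem e → s * e = e * s) (hm : IsIdempotentElem m)
    (hms : NatLe m s) (hmax : ∀ f : S, IsIdempotentElem f → NatLe f s → NatLe f m) :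
    s = m := by
  have hss := isIdempotentElem_mul_star s
  set d := (s * star s) \ m
  have hd : IsIdempotentElem d := sdiff_idem _ _ hss hm
  have hds : d * s = 0 := by
    by_contra hne
    obtain ⟨f, hf0, hf, hfds⟩ := hQ (d * s) hne fun e he => by
      rw [mul_assoc, hs e he, ← mul_assoc, mul_comm_of_isIdempotentElem hd he, mul_assoc]
    have hfm : m * f = f :=
      (hmax f hf (hfds.trans (NatLe.of_isIdempotentElem_mul hd s))).mul_eq_of_isIdempotentElem hf
    apply hf0
    calc f = d * s * (m * f) := by rw [hfm, hfds.mul_eq_of_isIdempotentElem hf]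
      _ = d * m * (s * f) := by rw [← mul_assoc, mul_assoc d, hs m hm]; simp only [mul_assoc]
      _ = 0 := by rw [sdiff_mul _ _ hss hm, InverseSemigroup0.zero_mul]
  calc s = s * star s * s := (mul_star_mul_self s).symm
    _ = d * s ⊔ s * star s * m * s := (sdiff_mul_sup_mul hss hm s).symm
    _ = m * s := by
        rw [hds, zero_sup, mul_comm_of_isIdempotentElem hss hm, mul_assoc, mul_star_mul_self]
    _ = m := by rw [← hs m hm, hms.mul_eq_of_isIdempotentElem hm]

theorem QuasiFundamental.fundamental (hH : HausdorffIS S) (hQ : QuasiFundamental S) :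
    Fundamental S := fun s hs =>
  let ⟨_, hm, hms, hmax⟩ := hH.exists_greatest_idempotent_natLe s
  hQ.eq_of_greatest_idempotent_natLe hs hm hms hmax ▸ hm

end Hausdorff

theorem Fundamental.quasiFundamental {S : Type*} [InverseSemigroup0 S] (hF : Fundamental S) :
    QuasiFundamental S :=
  fun s hs0 hs => ⟨s, hs0, hF s hs, NatLe.refl s⟩

/-- A Hausdorff Boolean inverse semigroup is quasi-fundamental iff it is fundamental. -/
theorem stmt6 (S : Type*) [BooleanInverseSemigroup0 S] (hH : HausdorffIS S) :
    QuasiFundamental S ↔ Fundamental S :=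
  ⟨QuasiFundamental.fundamental hH, Fundamental.quasiFundamental⟩
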